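/- Absolute convergence of the kernel series R_{s;k,N,ψ}: let N ≥ 1 and k ≥ 3 be integers, let z ∈ ℍ, and let s be a complex number with 1 < Re(s) < k/2 − 3/4. Let S = {(c, d) ∈ ℤ² : gcd(c, d) = 1 and 4N ∣ c}, and for each (c, d) ∈ S fix integers a(c,d), b(c,d) with a(c,d)·d − b(c,d)·c = 1 and set w(c,d) := (a(c,d)·z + b(c,d))/(cz + d) ∈ ℍ. Then the family ((c,d), n) ↦ (cz + d)^{-(k+1/2)} · (w(c,d) + n)^{-s}, indexed by (c,d) ∈ S and n ∈ ℤ, is absolutely summable. -/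

import Mathlib

/-!
Write `D = cz + d` and `w = (az + b)/D`, so that `Im w = Im z / |D|²`. After shifting `n` by the
integer nearest to `Re w`, the shifted point `v` satisfies `|v| ≥ Im w` and, for `n ≠ 0`,
`|v| ≥ |n|/2`. Hence the `n`-sum of `|v|^{-Re s}` is at most
`(Im z)^{-Re s} |D|^{2 Re s} + 2^{Re s} ∑_{n ≠ 0} |n|^{-Re s}`, and the remaining sums over
`(c, d)` are Eisenstein-type sums `∑ |cz + d|^{-β}`, with `β = k + 1/2 - 2 Re s` and
`β = k + 1/2`, which converge because both exponents exceed `2`.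
-/

open Complex Real

lemma norm_cpow_le_rpow_mul_exp (v u : ℂ) :
    ‖v ^ u‖ ≤ ‖v‖ ^ u.re * Real.exp (π * |u.im|) := by
  refine (Complex.norm_cpow_le v u).trans ?_
  rw [div_eq_mul_inv, ← Real.exp_neg]
  gcongr
  calc -(v.arg * u.im) ≤ |v.arg * u.im| := neg_le_abs _
    _ = |v.arg| * |u.im| := abs_mul _ _
    _ ≤ π * |u.im| := by gcongr; exact Complex.abs_arg_le_pi v

lemma summable_norm_intCast_mul_add_rpow_neg (z : UpperHalfPlane) {β : ℝ} (hβ : 2 < β)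
    {ι : Type*} {c d : ι → ℤ} (hcd : Function.Injective fun p => (c p, d p)) :
    Summable fun p => ‖(c p : ℂ) * z + d p‖ ^ (-β) := by
  have hinj : Function.Injective fun p => (![c p, d p] : Fin 2 → ℤ) := fun p q h =>
    hcd (Prod.ext (congrFun h 0) (congrFun h 1))
  refine .of_nonneg_of_le (fun _ => by positivity) (fun p => ?_)
    (((EisensteinSeries.summable_one_div_norm_rpow hβ).mul_left
      (EisensteinSeries.r z ^ (-β))).comp_injective hinj)
  simpa using EisensteinSeries.summand_bound z (by linarith) ![c p, d p]

lemma intCast_mul_add_ne_zero_of_det_eq_one (z : UpperHalfPlane) {a b c d : ℤ}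
    (h : a * d - b * c = 1) : (c : ℂ) * z + d ≠ 0 := by
  have hcd : (![(c : ℝ), d] : Fin 2 → ℝ) ≠ 0 := by
    intro h0
    have hc : c = 0 := by simpa using congrFun h0 0
    have hd : d = 0 := by simpa using congrFun h0 1
    simp [hc, hd] at h
  simpa using UpperHalfPlane.linear_ne_zero z hcd

lemma im_div_of_det_eq_one (z : UpperHalfPlane) {a b c d : ℤ} (h : a * d - b * c = 1) :
    (((a : ℂ) * z + b) / ((c : ℂ) * z + d)).im = z.im / ‖(c : ℂ) * z + d‖ ^ 2 := by
  rw [Complex.div_im, Complex.sq_norm, div_sub_div_same]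
  congr 1
  have h' : (a : ℝ) * d - (b : ℝ) * c = 1 := by exact_mod_cast h
  simp only [Complex.add_im, Complex.add_re, Complex.mul_im, Complex.mul_re,
    Complex.intCast_re, Complex.intCast_im, UpperHalfPlane.coe_im, UpperHalfPlane.coe_re]
  linear_combination z.im * h'

lemma abs_div_two_le_norm_add_intCast_sub_round (w : ℂ) (j : ℤ) :
    |(j : ℝ)| / 2 ≤ ‖w + ((j - round w.re : ℤ) : ℂ)‖ := by
  set v := w + ((j - round w.re : ℤ) : ℂ)
  rcases eq_or_ne j 0 with rfl | hj
  · simp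
  have hj1 : (1 : ℝ) ≤ |(j : ℝ)| := by exact_mod_cast Int.one_le_abs hj
  have hv : (j : ℝ) = v.re - (w.re - round w.re) := by simp [v]
  have := abs_sub_round w.re
  calc |(j : ℝ)| / 2 ≤ |(j : ℝ)| - 1 / 2 := by linarith
    _ ≤ |v.re| := by rw [hv]; linarith [abs_sub v.re (w.re - round w.re)]
    _ ≤ ‖v‖ := Complex.abs_re_le_norm v

lemma norm_add_intCast_sub_round_rpow_neg_le {w : ℂ} (hw : 0 < w.im) {σ : ℝ} (hσ : 0 ≤ σ)
    (j : ℤ) :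
    ‖w + ((j - round w.re : ℤ) : ℂ)‖ ^ (-σ) ≤
      w.im ^ (-σ) * (if j = 0 then 1 else 0) + 2 ^ σ * |(j : ℝ)| ^ (-σ) := by
  rcases eq_or_ne j 0 with rfl | hj
  · have him : w.im ≤ ‖w + ((0 - round w.re : ℤ) : ℂ)‖ := by
      simpa using Complex.im_le_norm (w + ((0 - round w.re : ℤ) : ℂ))
    simp only [if_pos, mul_one]
    exact le_add_of_le_of_nonneg (Real.rpow_le_rpow_of_nonpos hw him (by linarith))
      (by positivity)
  · have hj' : 0 < |(j : ℝ)| / 2 := by positivity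
    simp only [hj, if_false, mul_zero, zero_add]
    calc _ ≤ (|(j : ℝ)| / 2) ^ (-σ) := Real.rpow_le_rpow_of_nonpos hj'
          (abs_div_two_le_norm_add_intCast_sub_round w j) (by linarith)
      _ = 2 ^ σ * |(j : ℝ)| ^ (-σ) := by
          rw [Real.div_rpow (abs_nonneg _) zero_le_two, Real.rpow_neg zero_le_two]
          field_simp

lemma norm_cpow_neg_mul_cpow_neg_le (D : ℂ) {w : ℂ} (hw : 0 < w.im) {r s : ℂ}
    (hs : 0 ≤ s.re) (j : ℤ) :
    ‖D ^ (-r) * (w + ((j - round w.re : ℤ) : ℂ)) ^ (-s)‖ ≤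
      Real.exp (π * |r.im|) * Real.exp (π * |s.im|) * (‖D‖ ^ (-r.re) *
        (w.im ^ (-s.re) * (if j = 0 then 1 else 0) + 2 ^ s.re * |(j : ℝ)| ^ (-s.re))) := by
  rw [norm_mul]
  have hD := norm_cpow_le_rpow_mul_exp D (-r)
  have hv := norm_cpow_le_rpow_mul_exp (w + ((j - round w.re : ℤ) : ℂ)) (-s)
  simp only [Complex.neg_re, Complex.neg_im, abs_neg] at hD hv
  calc _ ≤ (‖D‖ ^ (-r.re) * Real.exp (π * |r.im|)) *
        (‖w + ((j - round w.re : ℤ) : ℂ)‖ ^ (-s.re) * Real.exp (π * |s.im|)) := by gcongr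
    _ ≤ (‖D‖ ^ (-r.re) * Real.exp (π * |r.im|)) *
        ((w.im ^ (-s.re) * (if j = 0 then 1 else 0) + 2 ^ s.re * |(j : ℝ)| ^ (-s.re)) *
          Real.exp (π * |s.im|)) := by
      gcongr; exact norm_add_intCast_sub_round_rpow_neg_le hw hs j
    _ = _ := by ring

lemma rpow_neg_mul_div_sq_rpow_neg {x : ℝ} (hx : 0 < x) {y : ℝ} (hy : 0 ≤ y) (ρ σ : ℝ) :
    x ^ (-ρ) * (y / x ^ 2) ^ (-σ) = y ^ (-σ) * x ^ (-(ρ - 2 * σ)) := by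
  rw [Real.div_rpow hy (by positivity), ← Real.rpow_natCast, ← Real.rpow_mul hx.le,
    div_eq_mul_inv, ← Real.rpow_neg (by positivity), mul_left_comm, ← Real.rpow_add hx]
  congr 2
  push_cast
  ring

theorem summable_norm_cpow_neg_mul_div_add_intCast_cpow_neg {ι : Type*} (z : UpperHalfPlane)
    {r s : ℂ} (hs : 1 < s.re) (hrs : 2 + 2 * s.re < r.re) {a b c d : ι → ℤ}
    (hcd : Function.Injective fun p => (c p, d p)) (hdet : ∀ p, a p * d p - b p * c p = 1) :
    Summable fun q : ι × ℤ => ‖((c q.1 : ℂ) * z + d q.1) ^ (-r) *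
      (((a q.1 : ℂ) * z + b q.1) / ((c q.1 : ℂ) * z + d q.1) + q.2) ^ (-s)‖ := by
  set D : ι → ℂ := fun p => (c p : ℂ) * z + d p
  set w : ι → ℂ := fun p => ((a p : ℂ) * z + b p) / D p
  have hD : ∀ p, 0 < ‖D p‖ := fun p =>
    norm_pos_iff.mpr (intCast_mul_add_ne_zero_of_det_eq_one z (hdet p))
  have hw : ∀ p, (w p).im = z.im / ‖D p‖ ^ 2 := fun p => im_div_of_det_eq_one z (hdet p)
  have hw_pos : ∀ p, 0 < (w p).im := fun p => by rw [hw]; have := hD p; positivity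
  have hA : Summable fun p => ‖D p‖ ^ (-r.re) * (w p).im ^ (-s.re) := by
    refine ((summable_norm_intCast_mul_add_rpow_neg z (β := r.re - 2 * s.re) (by linarith)
      hcd).mul_left (z.im ^ (-s.re))).congr fun p => ?_
    rw [hw, rpow_neg_mul_div_sq_rpow_neg (hD p) z.im_pos.le]
  have hB : Summable fun p => ‖D p‖ ^ (-r.re) * 2 ^ s.re :=
    (summable_norm_intCast_mul_add_rpow_neg z (β := r.re) (by linarith) hcd).mul_right _
  have hmajorant := ((hA.mul_of_nonneg (hasSum_ite_eq (0 : ℤ) (1 : ℝ)).summable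
    (fun p => mul_nonneg (by positivity) (Real.rpow_nonneg (hw_pos p).le _))
    (fun _ => by dsimp only; positivity)).add
    (hB.mul_of_nonneg (Real.summable_abs_int_rpow hs)
      (fun _ => by positivity) (fun _ => by positivity))).mul_left
    (Real.exp (π * |r.im|) * Real.exp (π * |s.im|))
  rw [← (Equiv.prodShear (Equiv.refl ι) fun p => Equiv.subRight (round (w p).re)).summable_iff]
  refine .of_nonneg_of_le (fun _ => norm_nonneg _) (fun q => ?_) hmajorant
  refine (norm_cpow_neg_mul_cpow_neg_le (D q.1) (hw_pos q.1) (by linarith) q.2).trans_eq ?_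
  ring

theorem summable_kernel_series_general (N k : ℤ)
    (z : UpperHalfPlane) (s : ℂ) (hs1 : 1 < s.re) (hs2 : s.re < (k : ℝ) / 2 - 3 / 4)
    (a b : {p : ℤ × ℤ // IsCoprime p.1 p.2 ∧ (4 * N) ∣ p.1} → ℤ)
    (hab : ∀ p : {p : ℤ × ℤ // IsCoprime p.1 p.2 ∧ (4 * N) ∣ p.1},
      a p * p.1.2 - b p * p.1.1 = 1) :
    Summable (fun q : {p : ℤ × ℤ // IsCoprime p.1 p.2 ∧ (4 * N) ∣ p.1} × ℤ =>
      ‖((q.1.1.1 : ℂ) * z + q.1.1.2) ^ (-((k : ℂ) + 1 / 2)) *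
        (((a q.1 : ℂ) * z + b q.1) / ((q.1.1.1 : ℂ) * z + q.1.1.2) + q.2) ^ (-s)‖) := by
  have hrs : 2 + 2 * s.re < ((k : ℂ) + 1 / 2).re := by norm_num; linarith
  exact summable_norm_cpow_neg_mul_div_add_intCast_cpow_neg z hs1 hrs (a := a) (b := b)
    (c := fun p => p.1.1) (d := fun p => p.1.2) (fun _ _ h => Subtype.ext h) hab

/-- Absolute convergence of the kernel series `R_{s;k,N,ψ}`: for `N ≥ 1`,
`k ≥ 3`, `z ∈ ℍ` and `1 < Re s < k/2 − 3/4`, the family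
`((c,d), n) ↦ (cz + d)^{-(k+1/2)} · (w(c,d) + n)^{-s}`, indexed by coprime
pairs `(c, d)` with `4N ∣ c` and `n ∈ ℤ`, where
`w(c,d) = (a(c,d)z + b(c,d))/(cz + d)` for a fixed choice of integers with
`a(c,d)·d − b(c,d)·c = 1`, is absolutely summable. -/
theorem summable_kernel_series (N k : ℤ) (hN : 1 ≤ N) (hk : 3 ≤ k)
    (z : UpperHalfPlane) (s : ℂ) (hs1 : 1 < s.re) (hs2 : s.re < (k : ℝ) / 2 - 3 / 4)
    (a b : {p : ℤ × ℤ // IsCoprime p.1 p.2 ∧ (4 * N) ∣ p.1} → ℤ)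
    (hab : ∀ p : {p : ℤ × ℤ // IsCoprime p.1 p.2 ∧ (4 * N) ∣ p.1},
      a p * p.1.2 - b p * p.1.1 = 1) :
    Summable (fun q : {p : ℤ × ℤ // IsCoprime p.1 p.2 ∧ (4 * N) ∣ p.1} × ℤ =>
      ‖((q.1.1.1 : ℂ) * z + q.1.1.2) ^ (-((k : ℂ) + 1 / 2)) *
        (((a q.1 : ℂ) * z + b q.1) / ((q.1.1.1 : ℂ) * z + q.1.1.2) + q.2) ^ (-s)‖) :=
  summable_kernel_series_general N k z s hs1 hs2 a b hab
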